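/- Under the discount-update hypotheses (γ ∈ (0,1), K ∈ S_γ with J_γ(K) > ℓ₀, Ĵ ∈ ℝ with |J_γ(K) − Ĵ| ≤ J_γ(K)/2, ζ ∈ (0,1), α = ℓ₀/(2Ĵ − ℓ₀), γ' = (1 + ζα)γ), it holds that √γ'·ρ(A − BKC) < 1. -/

import Mathlib

open Matrix

noncomputable section

/-- Spectral radius of a real square matrix: the largest modulus of a complex eigenvalue. -/
def specRad {n : ℕ} (M : Matrix (Fin n) (Fin n) ℝ) : ℝ :=
  sSup {r : ℝ | ∃ μ ∈ spectrum ℂ (M.map (algebraMap ℝ ℂ)), r = ‖μ‖}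

/-- Spectral (ℓ²→ℓ² operator) norm of a real matrix. -/
def spNorm {a b : ℕ} (M : Matrix (Fin a) (Fin b) ℝ) : ℝ :=
  ‖LinearMap.toContinuousLinearMap (Matrix.toEuclideanLin M)‖

/-- Frobenius norm of a real matrix. -/
def frobNorm {a b : ℕ} (M : Matrix (Fin a) (Fin b) ℝ) : ℝ :=
  Real.sqrt (∑ i, ∑ j, (M i j) ^ 2)

/-- Euclidean norm of a vector. -/
def vecNorm {a : ℕ} (x : Fin a → ℝ) : ℝ :=
  Real.sqrt (∑ i, (x i) ^ 2)

variable {n m p : ℕ}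

/-- Closed-loop matrix `A - BKC`. -/
def Acl (A : Matrix (Fin n) (Fin n) ℝ) (B : Matrix (Fin n) (Fin m) ℝ)
    (C : Matrix (Fin p) (Fin n) ℝ) (K : Matrix (Fin m) (Fin p) ℝ) : Matrix (Fin n) (Fin n) ℝ :=
  A - B * K * C

/-- Membership in the stabilizing set `S_γ`: `√γ · ρ(A − BKC) < 1`. -/
def inS (A : Matrix (Fin n) (Fin n) ℝ) (B : Matrix (Fin n) (Fin m) ℝ)
    (C : Matrix (Fin p) (Fin n) ℝ) (γ : ℝ) (K : Matrix (Fin m) (Fin p) ℝ) : Prop :=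
  Real.sqrt γ * specRad (Acl A B C K) < 1

/-- The solution `P_K(γ) = Σ_{t} γ^t ((A−BKC)ᵀ)^t (Q + CᵀKᵀRKC) (A−BKC)^t` of the
discounted Lyapunov equation. -/
def Pmat (A : Matrix (Fin n) (Fin n) ℝ) (B : Matrix (Fin n) (Fin m) ℝ)
    (C : Matrix (Fin p) (Fin n) ℝ) (Q : Matrix (Fin n) (Fin n) ℝ) (R : Matrix (Fin m) (Fin m) ℝ)
    (γ : ℝ) (K : Matrix (Fin m) (Fin p) ℝ) : Matrix (Fin n) (Fin n) ℝ :=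
  ∑' t : ℕ, γ ^ t • ((Acl A B C K)ᵀ ^ t * (Q + Cᵀ * Kᵀ * R * K * C) * (Acl A B C K) ^ t)

/-- The Gramian `Σ_K(γ) = Σ_{t} γ^t (A−BKC)^t ((A−BKC)ᵀ)^t`. -/
def Smat (A : Matrix (Fin n) (Fin n) ℝ) (B : Matrix (Fin n) (Fin m) ℝ)
    (C : Matrix (Fin p) (Fin n) ℝ) (γ : ℝ) (K : Matrix (Fin m) (Fin p) ℝ) :
    Matrix (Fin n) (Fin n) ℝ :=
  ∑' t : ℕ, γ ^ t • ((Acl A B C K) ^ t * ((Acl A B C K)ᵀ) ^ t)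

/-- The discounted cost `J_γ(K) = Tr(P_K(γ))`. -/
def Jcost (A : Matrix (Fin n) (Fin n) ℝ) (B : Matrix (Fin n) (Fin m) ℝ)
    (C : Matrix (Fin p) (Fin n) ℝ) (Q : Matrix (Fin n) (Fin n) ℝ) (R : Matrix (Fin m) (Fin m) ℝ)
    (γ : ℝ) (K : Matrix (Fin m) (Fin p) ℝ) : ℝ :=
  (Pmat A B C Q R γ K).trace

/-- `E_K = (R + γBᵀP_K(γ)B)KC − γBᵀP_K(γ)A`. -/
def Egrad (A : Matrix (Fin n) (Fin n) ℝ) (B : Matrix (Fin n) (Fin m) ℝ)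
    (C : Matrix (Fin p) (Fin n) ℝ) (Q : Matrix (Fin n) (Fin n) ℝ) (R : Matrix (Fin m) (Fin m) ℝ)
    (γ : ℝ) (K : Matrix (Fin m) (Fin p) ℝ) : Matrix (Fin m) (Fin n) ℝ :=
  (R + γ • (Bᵀ * Pmat A B C Q R γ K * B)) * K * C - γ • (Bᵀ * Pmat A B C Q R γ K * A)

/-- The closed-form gradient `∇J_γ(K) = 2 E_K Σ_K(γ) Cᵀ`. -/
def gradJ (A : Matrix (Fin n) (Fin n) ℝ) (B : Matrix (Fin n) (Fin m) ℝ)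
    (C : Matrix (Fin p) (Fin n) ℝ) (Q : Matrix (Fin n) (Fin n) ℝ) (R : Matrix (Fin m) (Fin m) ℝ)
    (γ : ℝ) (K : Matrix (Fin m) (Fin p) ℝ) : Matrix (Fin m) (Fin p) ℝ :=
  (2 : ℝ) • (Egrad A B C Q R γ K * Smat A B C γ K * Cᵀ)

end

/-!
Each term of the series defining `P_K(γ)` has trace at least `ℓ₀ (γρ²)^t`, where `ρ = ρ(A − BKC)`:
an eigenvalue is bounded by the Frobenius norm (test the matrix on an eigenvector), so
`ρ^t ≤ ‖(A − BKC)^t‖_F`, and `Q + CᵀKᵀRKC ⪰ ℓ₀ I` turns the Frobenius norm into a lower bound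
for the trace. Summing the geometric series gives `J ≥ ℓ₀ / (1 − γρ²)`, i.e. `Jγρ² ≤ J − ℓ₀`.
Since `2Ĵ ≥ J`, `α` satisfies `α (J − ℓ₀) ≤ ℓ₀`, hence
`J γ'ρ² = J(1 + ζα)γρ² ≤ J − ℓ₀ + ζℓ₀ < J`.
-/

theorem specRad_nonneg {k : ℕ} (M : Matrix (Fin k) (Fin k) ℝ) : 0 ≤ specRad M :=
  Real.sSup_nonneg <| by rintro _ ⟨μ, -, rfl⟩; exact norm_nonneg μ

theorem exists_mem_spectrum_norm_eq_specRad {k : ℕ} (hk : 0 < k) (M : Matrix (Fin k) (Fin k) ℝ) :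
    ∃ μ ∈ spectrum ℂ (M.map (algebraMap ℝ ℂ)), ‖μ‖ = specRad M := by
  have : Nonempty (Fin k) := ⟨⟨0, hk⟩⟩
  set σ := spectrum ℂ (M.map (algebraMap ℝ ℂ))
  have hσ : σ.Nonempty := by
    obtain ⟨μ, hμ⟩ := Module.End.exists_eigenvalue (toLin' (M.map (algebraMap ℝ ℂ)))
    exact ⟨μ, (spectrum_toLin' _).le hμ.mem_spectrum⟩
  have hS : {r : ℝ | ∃ μ ∈ σ, r = ‖μ‖} = norm '' σ := by
    ext r; simp [eq_comm]
  obtain ⟨μ, hμ, hμr⟩ := (hS ▸ hσ.image norm).csSup_mem (hS ▸ (finite_spectrum _).image norm)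
  exact ⟨μ, hμ, hμr.symm⟩

theorem sqrt_mul_lt_one_iff {γ r : ℝ} (hr : 0 ≤ r) : √γ * r < 1 ↔ γ * r ^ 2 < 1 := by
  have h : √γ * r = √(γ * r ^ 2) := by rw [Real.sqrt_mul' _ (sq_nonneg r), Real.sqrt_sq hr]
  rw [h, Real.sqrt_lt' one_pos, one_pow]

theorem posSemidef_cost_sub_smul_one {ι ι' κ : Type*} [Fintype ι] [Fintype ι'] [Fintype κ]
    [DecidableEq ι] [DecidableEq ι'] {Q : Matrix ι ι ℝ} {R : Matrix ι' ι' ℝ} {ℓ : ℝ}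
    (hQ : (Q - ℓ • 1).PosSemidef) (hR : (R - ℓ • 1).PosSemidef) (hℓ : 0 ≤ ℓ)
    (C : Matrix κ ι ℝ) (K : Matrix ι' κ ℝ) :
    (Q + Cᵀ * Kᵀ * R * K * C - ℓ • 1).PosSemidef := by
  have hR' : R.PosSemidef := by
    simpa using hR.add (PosSemidef.smul PosSemidef.one hℓ)
  have hKC := hR'.conjTranspose_mul_mul_same (K * C)
  rw [conjTranspose_eq_transpose_of_trivial, transpose_mul] at hKC
  rw [add_sub_right_comm]
  simpa only [Matrix.mul_assoc] using hQ.add hKC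

section Frobenius

attribute [local instance] Matrix.frobeniusNormedAddCommGroup Matrix.frobeniusNormedSpace

theorem norm_le_frobenius_norm_of_mem_spectrum {𝕜 ι : Type*} [RCLike 𝕜] [Fintype ι]
    [DecidableEq ι] {M : Matrix ι ι 𝕜} {μ : 𝕜} (hμ : μ ∈ spectrum 𝕜 M) : ‖μ‖ ≤ ‖M‖ := by
  rw [← spectrum_toLin', ← Module.End.hasEigenvalue_iff_mem_spectrum] at hμ
  obtain ⟨v, hv⟩ := hμ.exists_hasEigenvector
  have hMv : M *ᵥ v = μ • v := hv.apply_eq_smul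
  have hV : 0 < ‖replicateCol (Fin 1) v‖ :=
    norm_pos_iff.2 fun h => hv.2 (funext fun i => congrFun (congrFun h i) 0)
  refine le_of_mul_le_mul_right ?_ hV
  calc ‖μ‖ * ‖replicateCol (Fin 1) v‖ = ‖M * replicateCol (Fin 1) v‖ := by
        rw [← replicateCol_mulVec, hMv, replicateCol_smul, norm_smul]
    _ ≤ ‖M‖ * ‖replicateCol (Fin 1) v‖ := frobenius_norm_mul _ _

theorem frobenius_norm_sq_eq_trace {ι ι' : Type*} [Fintype ι] [Fintype ι']
    (X : Matrix ι ι' ℝ) : ‖X‖ ^ 2 = (Xᵀ * X).trace := by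
  rw [frobenius_norm_def, ← Real.sqrt_eq_rpow, Real.sq_sqrt (by positivity), trace,
    Finset.sum_comm]
  simp [mul_apply, sq]

theorem mul_frobenius_norm_sq_le_trace {ι ι' : Type*} [Fintype ι] [Fintype ι'] [DecidableEq ι]
    {M : Matrix ι ι ℝ} {c : ℝ} (hM : (M - c • 1).PosSemidef) (X : Matrix ι ι' ℝ) :
    c * ‖X‖ ^ 2 ≤ (Xᵀ * M * X).trace := by
  have h := (hM.conjTranspose_mul_mul_same X).trace_nonneg
  rw [conjTranspose_eq_transpose_of_trivial, Matrix.mul_sub, Matrix.sub_mul, Matrix.mul_smul,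
    Matrix.mul_one, Matrix.smul_mul, trace_sub, trace_smul, smul_eq_mul,
    ← frobenius_norm_sq_eq_trace] at h
  linarith

theorem specRad_pow_le_frobenius_norm {k : ℕ} (hk : 0 < k) (M : Matrix (Fin k) (Fin k) ℝ)
    (t : ℕ) : specRad M ^ t ≤ ‖M ^ t‖ := by
  obtain ⟨μ, hμ, hμr⟩ := exists_mem_spectrum_norm_eq_specRad hk M
  have hμt : μ ^ t ∈ spectrum ℂ ((M ^ t).map (algebraMap ℝ ℂ)) := by
    rw [← RingHom.mapMatrix_apply, map_pow]
    exact spectrum.pow_mem_pow _ t hμ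
  calc specRad M ^ t = ‖μ ^ t‖ := by rw [norm_pow, hμr]
    _ ≤ ‖(M ^ t).map (algebraMap ℝ ℂ)‖ := norm_le_frobenius_norm_of_mem_spectrum hμt
    _ = ‖M ^ t‖ := frobenius_norm_map_eq _ _ Complex.norm_real

theorem div_one_sub_le_trace_tsum {k : ℕ} (hk : 0 < k) {L M : Matrix (Fin k) (Fin k) ℝ} {c γ : ℝ}
    (hM : (M - c • 1).PosSemidef) (hc : 0 ≤ c) (hγ : 0 ≤ γ) (hρ : γ * specRad L ^ 2 < 1)
    (hs : Summable fun t : ℕ => γ ^ t • (Lᵀ ^ t * M * L ^ t)) :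
    c / (1 - γ * specRad L ^ 2) ≤ (∑' t : ℕ, γ ^ t • (Lᵀ ^ t * M * L ^ t)).trace := by
  have hgeom := (hasSum_geometric_of_lt_one (by positivity) hρ).mul_left c
  have htrace := hs.hasSum.map (traceAddMonoidHom (Fin k) ℝ) (continuous_id.matrix_trace)
  refine hasSum_le (fun t => ?_) hgeom htrace
  calc c * (γ * specRad L ^ 2) ^ t = γ ^ t * (c * (specRad L ^ t) ^ 2) := by ring
    _ ≤ γ ^ t * (c * ‖L ^ t‖ ^ 2) := by
        gcongr
        exacts [pow_nonneg (specRad_nonneg L) t, specRad_pow_le_frobenius_norm hk L t]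
    _ ≤ γ ^ t * (Lᵀ ^ t * M * L ^ t).trace := by
        rw [← transpose_pow]
        gcongr
        exact mul_frobenius_norm_sq_le_trace hM _
    _ = _ := by simp [trace_smul]

end Frobenius

theorem div_one_sub_le_Jcost {n m p : ℕ} (hn : 0 < n) {A : Matrix (Fin n) (Fin n) ℝ}
    {B : Matrix (Fin n) (Fin m) ℝ} {C : Matrix (Fin p) (Fin n) ℝ} {Q : Matrix (Fin n) (Fin n) ℝ}
    {R : Matrix (Fin m) (Fin m) ℝ} {ℓ γ : ℝ} {K : Matrix (Fin m) (Fin p) ℝ}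
    (hQ : (Q - ℓ • 1).PosSemidef) (hR : (R - ℓ • 1).PosSemidef) (hℓ : 0 ≤ ℓ) (hγ : 0 ≤ γ)
    (hρ : γ * specRad (Acl A B C K) ^ 2 < 1) (hJ : Jcost A B C Q R γ K ≠ 0) :
    ℓ / (1 - γ * specRad (Acl A B C K) ^ 2) ≤ Jcost A B C Q R γ K := by
  -- a divergent series has `tsum` zero, so `hJ` forces the series defining `P_K(γ)` to converge
  have hs : Summable fun t : ℕ =>
      γ ^ t • ((Acl A B C K)ᵀ ^ t * (Q + Cᵀ * Kᵀ * R * K * C) * (Acl A B C K) ^ t) := by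
    by_contra hs
    exact hJ (by rw [Jcost, Pmat, tsum_eq_zero_of_not_summable hs, trace_zero])
  exact div_one_sub_le_trace_tsum hn (posSemidef_cost_sub_smul_one hQ hR hℓ C K) hℓ hγ hρ hs

theorem discount_update_mul_lt_one {ℓ J Ĵ ζ x : ℝ} (hℓ : 0 < ℓ) (hJ : ℓ < J)
    (hĴ : |J - Ĵ| ≤ J / 2) (hζ : ζ ∈ Set.Ioo (0 : ℝ) 1) (hx : x < 1)
    (hJx : ℓ / (1 - x) ≤ J) :
    (1 + ζ * (ℓ / (2 * Ĵ - ℓ))) * x < 1 := by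
  obtain ⟨hζ0, hζ1⟩ := hζ
  have hD : J - ℓ ≤ 2 * Ĵ - ℓ := by linarith [(abs_le.1 hĴ).2]
  have hα0 : 0 ≤ ℓ / (2 * Ĵ - ℓ) := div_nonneg hℓ.le (by linarith)
  have hα : ℓ / (2 * Ĵ - ℓ) * (J - ℓ) ≤ ℓ := by
    rw [div_mul_eq_mul_div, div_le_iff₀ (by linarith)]
    nlinarith
  have hJx' : J * x ≤ J - ℓ := by
    rw [div_le_iff₀ (by linarith)] at hJx
    linarith
  have hJlt : J * ((1 + ζ * (ℓ / (2 * Ĵ - ℓ))) * x) < J * 1 := by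
    nlinarith [mul_le_mul_of_nonneg_left hJx' (mul_nonneg hζ0.le hα0),
      mul_le_mul_of_nonneg_left hα hζ0.le]
  exact lt_of_mul_lt_mul_left hJlt (by linarith)

theorem stmt13_general
    {n m p : ℕ} (hn : 1 ≤ n)
    (A : Matrix (Fin n) (Fin n) ℝ) (B : Matrix (Fin n) (Fin m) ℝ) (C : Matrix (Fin p) (Fin n) ℝ)
    (Q : Matrix (Fin n) (Fin n) ℝ) (R : Matrix (Fin m) (Fin m) ℝ)
    (ℓ₀ : ℝ) (hℓ₀ : 0 < ℓ₀)
    (hQlb : (Q - ℓ₀ • (1 : Matrix (Fin n) (Fin n) ℝ)).PosSemidef)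
    (hRlb : (R - ℓ₀ • (1 : Matrix (Fin m) (Fin m) ℝ)).PosSemidef)
    (γ : ℝ) (hγ : γ ∈ Set.Ioo (0 : ℝ) 1)
    (K : Matrix (Fin m) (Fin p) ℝ) (hK : inS A B C γ K)
    (hJ : ℓ₀ < Jcost A B C Q R γ K)
    (Jhat : ℝ) (hJhat : |Jcost A B C Q R γ K - Jhat| ≤ Jcost A B C Q R γ K / 2)
    (ζ : ℝ) (hζ : ζ ∈ Set.Ioo (0 : ℝ) 1)
    (γ' : ℝ) (hγ' : γ' = (1 + ζ * (ℓ₀ / (2 * Jhat - ℓ₀))) * γ) :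
    Real.sqrt γ' * specRad (Acl A B C K) < 1 := by
  have hρ0 := specRad_nonneg (Acl A B C K)
  have hρ : γ * specRad (Acl A B C K) ^ 2 < 1 := (sqrt_mul_lt_one_iff hρ0).1 hK
  have hJρ := div_one_sub_le_Jcost hn hQlb hRlb hℓ₀.le hγ.1.le hρ (by linarith)
  rw [sqrt_mul_lt_one_iff hρ0, hγ', mul_assoc]
  exact discount_update_mul_lt_one hℓ₀ hJ hJhat hζ hρ hJρ

/-- after the discount update `γ' = (1 + ζα)γ`, `α = ℓ₀/(2Jhat − ℓ₀)`,
the gain `K` remains damped-stabilizing: `√γ'·ρ(A − BKC) < 1`. -/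
theorem stmt13
    {n m p : ℕ} (hn : 1 ≤ n) (hm : 1 ≤ m) (hp : 1 ≤ p)
    (A : Matrix (Fin n) (Fin n) ℝ) (B : Matrix (Fin n) (Fin m) ℝ) (C : Matrix (Fin p) (Fin n) ℝ)
    (Q : Matrix (Fin n) (Fin n) ℝ) (R : Matrix (Fin m) (Fin m) ℝ)
    (hQsymm : Q.IsSymm) (hRsymm : R.IsSymm)
    (ℓ₀ ℓ₁ ψ φ : ℝ) (hℓ₀ : 0 < ℓ₀) (hℓ₀₁ : ℓ₀ ≤ ℓ₁) (hψ : 1 ≤ ψ) (hφ : 1 ≤ φ)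
    (hQlb : (Q - ℓ₀ • (1 : Matrix (Fin n) (Fin n) ℝ)).PosSemidef)
    (hQub : (ℓ₁ • (1 : Matrix (Fin n) (Fin n) ℝ) - Q).PosSemidef)
    (hRlb : (R - ℓ₀ • (1 : Matrix (Fin m) (Fin m) ℝ)).PosSemidef)
    (hRub : (ℓ₁ • (1 : Matrix (Fin m) (Fin m) ℝ) - R).PosSemidef)
    (hB : spNorm B ≤ ψ) (hC : spNorm C ≤ φ)
    (γ : ℝ) (hγ : γ ∈ Set.Ioo (0 : ℝ) 1)
    (K : Matrix (Fin m) (Fin p) ℝ) (hK : inS A B C γ K)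
    (hJ : ℓ₀ < Jcost A B C Q R γ K)
    (Jhat : ℝ) (hJhat : |Jcost A B C Q R γ K - Jhat| ≤ Jcost A B C Q R γ K / 2)
    (ζ : ℝ) (hζ : ζ ∈ Set.Ioo (0 : ℝ) 1)
    (γ' : ℝ) (hγ' : γ' = (1 + ζ * (ℓ₀ / (2 * Jhat - ℓ₀))) * γ) :
    Real.sqrt γ' * specRad (Acl A B C K) < 1 :=
  stmt13_general hn A B C Q R ℓ₀ hℓ₀ hQlb hRlb γ hγ K hK hJ Jhat hJhat ζ hζ γ' hγ'
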